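/- For any information flow diagram I with KTS K and requirement P (path existence): K ⊢ P if and only if I ⊨ P, i.e., K does not satisfy ¬enc(P) on all finite paths iff some path of I has kind P. -/

import Mathlib

set_option autoImplicit true

section IFCIL

variable {N O S A Pr : Type}

/-- Node patterns: a concrete node or the wildcard `*`. -/
inductive NodePat (N : Type) where
  | star : NodePat N
  | node : N → NodePat N

/-- An arc of an information flow diagram: source, nonempty set of operations, target. -/
abbrev Arc (N O : Type) := N × Set O × N

/-- An information flow diagram `I = (N, ta, E)`. -/
structure IFD (N O : Type) where
  ta : N → Set N
  E : Set (Arc N O)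

/-- A node pattern `m` matches a node `n`: `m = *` or `n ∈ ta(m)`. -/
def NodePat.mat (I : IFD N O) : NodePat N → N → Prop
  | .star, _ => True
  | .node m, n => n ∈ I.ta m

/-- Consecutive arcs have matching endpoints. -/
def Chained : List (Arc N O) → Prop
  | [] => True
  | [_] => True
  | a :: b :: rest => a.2.2 = b.1 ∧ Chained (b :: rest)

/-- A path in `I`: nonempty, chained sequence of arcs of `I`. -/
def PathIn (I : IFD N O) (π : List (Arc N O)) : Prop :=
  π ≠ [] ∧ Chained π ∧ ∀ a ∈ π, a ∈ I.E

/-- Arrows: single step `>` or multi step `+>`. -/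
inductive Arrow where
  | single : Arrow
  | multi : Arrow

/-- Path kinds `P ::= n [o]> n' | n +[o]> n' | P₁ P₂`. -/
inductive Kind (N O : Type) where
  | atom : NodePat N → Arrow → Set O → NodePat N → Kind N O
  | comp : Kind N O → Kind N O → Kind N O

/-- The kind satisfaction relation `π ▷_I P`. -/
inductive KSat (I : IFD N O) : List (Arc N O) → Kind N O → Prop where
  | step : NodePat.mat I m n → NodePat.mat I m' n' → (o ∩ o').Nonempty →
      KSat I [(n, o, n')] (.atom m .single o' m')
  | plusBase : KSat I [(n, o, n')] (.atom m .single o' m') →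
      KSat I [(n, o, n')] (.atom m .multi o' m')
  | plusStep : KSat I [(n, o, n')] (.atom m .single o' .star) →
      KSat I π (.atom .star .multi o' m') →
      KSat I ((n, o, n') :: π) (.atom m .multi o' m')
  | comp : KSat I π₁ P₁ → KSat I π₂ P₂ → KSat I (π₁ ++ π₂) (.comp P₁ P₂)

/-- Node refinement: `n ⪯_n n` and `n ⪯_n *`. -/
def NRef : NodePat N → NodePat N → Prop := fun a b => a = b ∨ b = .star

/-- Arrow refinement: reflexivity and `> ⪯_a +>`. -/
inductive ARef : Arrow → Arrow → Prop where
  | refl (a) : ARef a a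
  | up : ARef .single .multi

/-- Kind refinement `⪯_P`: rules (comp), (P-1)–(P-4), closed under reflexivity
and transitivity. -/
inductive KRef : Kind N O → Kind N O → Prop where
  | refl (P) : KRef P P
  | trans : KRef P Q → KRef Q R → KRef P R
  | comp : KRef P₁ P₁' → KRef P₂ P₂' → KRef (.comp P₁ P₂) (.comp P₁' P₂')
  | atom : NRef n₁ n₁' → NRef n₂ n₂' → ARef w w' → o ⊆ o' →
      KRef (.atom n₁ w o n₂) (.atom n₁' w' o' n₂')
  | p2 : NRef n₁ n₁' → NRef n₂ n₂' → o₁ ⊆ o₁' → o₁ ⊆ o₂' → o₂ ⊆ o₂' →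
      KRef (.comp (.atom n₁ .multi o₁ .star) (.atom .star .single o₂ n₂))
           (.comp (.atom n₁' .single o₁' .star) (.atom .star .multi o₂' n₂'))
  | p3 : NRef n₁ n₁' → NRef n₂ n₂' → o₁ ⊆ o' → o₂ ⊆ o' →
      KRef (.comp (.atom n₁ .multi o₁ .star) (.atom .star .multi o₂ n₂))
           (.atom n₁' .multi o' n₂')
  | p4 : NRef n₁ n₁' → NRef n₂ n₂' → o₁ ⊆ o₁' → o₂ ⊆ o₂' → o₂ ⊆ o₁' →
      KRef (.comp (.atom n₁ .single o₁ .star) (.atom .star .multi o₂ n₂))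
           (.comp (.atom n₁' .multi o₁' .star) (.atom .star .single o₂' n₂'))

/-- IFL requirements `R ::= P | ~P | P : P'`. -/
inductive Req (N O : Type) where
  | ex : Kind N O → Req N O
  | no : Kind N O → Req N O
  | constr : Kind N O → Kind N O → Req N O

/-- Validity `I ⊨ R`. -/
def Valid (I : IFD N O) : Req N O → Prop
  | .ex P => ∃ π, PathIn I π ∧ KSat I π P
  | .no P => ¬ ∃ π, PathIn I π ∧ KSat I π P
  | .constr P P' => ∀ π, PathIn I π → KSat I π P → KSat I π P'

/-- Requirement refinement `⪯`: rules (R-1)–(R-3), closed under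
reflexivity and transitivity. -/
inductive RRef : Req N O → Req N O → Prop where
  | refl (R) : RRef R R
  | trans : RRef R₁ R₂ → RRef R₂ R₃ → RRef R₁ R₃
  | ex : KRef P P' → RRef (.ex P) (.ex P')
  | no : KRef P P' → RRef (.no P') (.no P)
  | constr : KRef P₁ P₁' → KRef P₂ P₂' → RRef (.constr P₁' P₂) (.constr P₁ P₂')

/-- The equivalent, right-linear grammar of kinds:
`P ::= n [o]> n' | n +[o]> n' | (n [o]> n') P | (n +[o]> n') P`. -/
inductive LKind (N O : Type) where
  | step : NodePat N → Set O → NodePat N → LKind N O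
  | plus : NodePat N → Set O → NodePat N → LKind N O
  | stepC : NodePat N → Set O → NodePat N → LKind N O → LKind N O
  | plusC : NodePat N → Set O → NodePat N → LKind N O → LKind N O

/-- Kind satisfaction `π ▷_I P` for the right-linear grammar. -/
inductive LSat (I : IFD N O) : List (Arc N O) → LKind N O → Prop where
  | step : NodePat.mat I m n → NodePat.mat I m' n' → (o ∩ o').Nonempty →
      LSat I [(n, o, n')] (.step m o' m')
  | plusBase : LSat I [(n, o, n')] (.step m o' m') →
      LSat I [(n, o, n')] (.plus m o' m')
  | plusStep : LSat I [(n, o, n')] (.step m o' .star) →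
      LSat I π (.plus .star o' m') →
      LSat I ((n, o, n') :: π) (.plus m o' m')
  | stepC : LSat I [(n, o, n')] (.step m o' .star) → LSat I π P →
      LSat I ((n, o, n') :: π) (.stepC m o' m' P)
  | plusCBase : LSat I π (.stepC m o' m' P) → LSat I π (.plusC m o' m' P)
  | plusCStep : LSat I [(n, o, n')] (.step m o' .star) →
      LSat I π (.plusC .star o' .star P) →
      LSat I ((n, o, n') :: π) (.plusC m o' m' P)

/-- LTL formulas over atomic propositions `Pr` and actions `A`;
`acts o` stands for the disjunction `⋁_{op ∈ o} (op)`. -/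
inductive LTL (Pr A : Type) where
  | tt : LTL Pr A
  | atom : Pr → LTL Pr A
  | acts : Set A → LTL Pr A
  | and : LTL Pr A → LTL Pr A → LTL Pr A
  | or : LTL Pr A → LTL Pr A → LTL Pr A
  | not : LTL Pr A → LTL Pr A
  | next : LTL Pr A → LTL Pr A
  | untl : LTL Pr A → LTL Pr A → LTL Pr A

/-- A finite KTS path: a state followed by a list of (action, state) steps. -/
structure FinPath (S A : Type) where
  first : S
  rest : List (A × S)

/-- Drop the first `k` transitions of a finite path. -/
def FinPath.drop : FinPath S A → ℕ → FinPath S A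
  | w, 0 => w
  | ⟨s, []⟩, _ + 1 => ⟨s, []⟩
  | ⟨_, (_, s') :: r⟩, k + 1 => FinPath.drop ⟨s', r⟩ k

/-- Finite-path LTL semantics `w ⊨_l φ` with labeling `L`. -/
def FSat (L : S → Set Pr) : LTL Pr A → FinPath S A → Prop
  | .tt, _ => True
  | .atom p, w => p ∈ L w.first
  | .acts o, w => ∃ a s r, w.rest = (a, s) :: r ∧ a ∈ o
  | .and φ ψ, w => FSat L φ w ∧ FSat L ψ w
  | .or φ ψ, w => FSat L φ w ∨ FSat L ψ w
  | .not φ, w => ¬ FSat L φ w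
  | .next φ, w => ∃ a s r, w.rest = (a, s) :: r ∧ FSat L φ ⟨s, r⟩
  | .untl φ ψ, w => ∃ k, k ≤ w.rest.length ∧ FSat L ψ (w.drop k) ∧
      ∀ j < k, FSat L φ (w.drop j)

/-- The LTL encoding `enc(P)` of flow kinds (finite-path version,
with end marker `¬X(true)`). -/
def encK : LKind N O → LTL (NodePat N) O
  | .step n o n' =>
      .and (.atom n) (.and (.acts o) (.next (.and (.atom n') (.not (.next .tt)))))
  | .plus n o n' =>
      .and (.atom n) (.and (.acts o)
        (.next (.untl (.acts o) (.and (.atom n') (.not (.next .tt))))))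
  | .stepC n o _ P => .and (.atom n) (.and (.acts o) (.next (encK P)))
  | .plusC n o _ P =>
      .and (.atom n) (.and (.acts o) (.next (.untl (.acts o) (encK P))))

/-- The labeling `Λ` of the KTS of `I`: `M ∈ Λ(n)` iff `n ∈ ta(M)`
(with the wildcard true everywhere). -/
def labelOf (I : IFD N O) : N → Set (NodePat N) :=
  fun n => {p | NodePat.mat I p n}

/-- `encRest π r`: the steps `r` traverse the arcs `π` choosing one
operation from each arc's operation set. -/
def encRest : List (Arc N O) → List (O × N) → Prop
  | [], [] => True
  | (_, o, n') :: π, (op, s) :: r => op ∈ o ∧ s = n' ∧ encRest π r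
  | _, _ => False

/-- `w ∈ enc(π)` : the KTS path `w` results from the diagram path `π`
by choosing one operation from each arc's operation set. -/
def encPath (π : List (Arc N O)) (w : FinPath N O) : Prop :=
  match π with
  | [] => False
  | (n, _, _) :: _ => w.first = n ∧ encRest π w.rest

/-- Auxiliary for `π_w`. -/
def diagOf : N → List (O × N) → List (Arc N O)
  | _, [] => []
  | s, (op, s') :: r => (s, ({op} : Set O), s') :: diagOf s' r

/-- `π_w`: the diagram path obtained from a KTS path by replacing each
action `op` with the singleton `{op}`. -/
def FinPath.toDiagram (w : FinPath N O) : List (Arc N O) := diagOf w.first w.rest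

/-- A transition of the KTS of `I`: `E' = {(n, op, n') | (n,o,n') ∈ E, op ∈ o}`. -/
def ktsStep (I : IFD N O) (s : N) (op : O) (s' : N) : Prop :=
  ∃ o, (s, o, s') ∈ I.E ∧ op ∈ o

def ktsRest (I : IFD N O) : N → List (O × N) → Prop
  | _, [] => True
  | s, (op, s') :: r => ktsStep I s op s' ∧ ktsRest I s' r

/-- `w` is a (finite) path of the KTS of `I`. -/
def KTSPath (I : IFD N O) (w : FinPath N O) : Prop := ktsRest I w.first w.rest

/-- `K ⊨_l φ`: every finite path of the KTS of `I` satisfies `φ`. -/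
def KModels (I : IFD N O) (φ : LTL (NodePat N) O) : Prop :=
  ∀ w, KTSPath I w → FSat (labelOf I) φ w

/-- IFL requirements over right-linear kinds. -/
inductive LReq (N O : Type) where
  | ex : LKind N O → LReq N O
  | no : LKind N O → LReq N O
  | constr : LKind N O → LKind N O → LReq N O

/-- Validity `I ⊨ R` for right-linear requirements. -/
def LValid (I : IFD N O) : LReq N O → Prop
  | .ex P => ∃ π, PathIn I π ∧ LSat I π P
  | .no P => ¬ ∃ π, PathIn I π ∧ LSat I π P
  | .constr P P' => ∀ π, PathIn I π → LSat I π P → LSat I π P'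

/-- Satisfaction `K ⊢ R` in the finite-path KTS semantics. -/
def KEnt (I : IFD N O) : LReq N O → Prop
  | .ex P => ¬ KModels I (.not (encK P))
  | .no P => KModels I (.not (encK P))
  | .constr P P' => KModels I (.or (.not (encK P)) (encK P'))

/-- Infinite KTS paths. -/
structure InfPath (S A : Type) where
  state : ℕ → S
  act : ℕ → A

def InfPath.drop (w : InfPath S A) (k : ℕ) : InfPath S A :=
  ⟨fun i => w.state (i + k), fun i => w.act (i + k)⟩

/-- Infinite-path LTL semantics. -/
def ISat (L : S → Set Pr) : LTL Pr A → InfPath S A → Prop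
  | .tt, _ => True
  | .atom p, w => p ∈ L (w.state 0)
  | .acts o, w => w.act 0 ∈ o
  | .and φ ψ, w => ISat L φ w ∧ ISat L ψ w
  | .or φ ψ, w => ISat L φ w ∨ ISat L ψ w
  | .not φ, w => ¬ ISat L φ w
  | .next φ, w => ISat L φ (w.drop 1)
  | .untl φ ψ, w => ∃ k, ISat L ψ (w.drop k) ∧ ∀ j < k, ISat L φ (w.drop j)

/-- Atomic propositions for the sink-extended KTS: node patterns plus
the distinguished proposition `ι`. -/
abbrev SProp (N : Type) := NodePat N ⊕ Unit

/-- Labeling of the sink-extended KTS: the sink (`none`) is labeled only by `ι`. -/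
def labelι (I : IFD N O) : Option N → Set (SProp N)
  | some n => {p | ∃ q, p = Sum.inl q ∧ NodePat.mat I q n}
  | none => {Sum.inr ()}

/-- The encoding `enc_ι(P)` of flow kinds for the sink-extended KTS:
identical to `enc` except that `¬X(true)` is replaced by `X(ι)`. -/
def encι : LKind N O → LTL (SProp N) O
  | .step n o n' =>
      .and (.atom (.inl n)) (.and (.acts o)
        (.next (.and (.atom (.inl n')) (.next (.atom (.inr ()))))))
  | .plus n o n' =>
      .and (.atom (.inl n)) (.and (.acts o)
        (.next (.untl (.acts o) (.and (.atom (.inl n')) (.next (.atom (.inr ())))))))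
  | .stepC n o _ P => .and (.atom (.inl n)) (.and (.acts o) (.next (encι P)))
  | .plusC n o _ P =>
      .and (.atom (.inl n)) (.and (.acts o) (.next (.untl (.acts o) (encι P))))

/-- The states of a finite path. -/
def FinPath.states (w : FinPath S A) : List S := w.first :: w.rest.map Prod.snd

/-- `w·ι^ω`: the finite path `w` followed by the sink forever
(with arbitrary operation labels `ops` into `ι`). -/
def appendSink (w : FinPath N O) (ops : ℕ → O) : InfPath (Option N) O where
  state := fun i => w.states[i]?
  act := fun i => if h : i < w.rest.length then (w.rest.get ⟨i, h⟩).1 else ops i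

/-- Transitions of the sink-extended KTS `K_ι`: the transitions of `K`,
transitions from every state to the sink with every operation, and the
self-loop on the sink. -/
def sinkStep (I : IFD N O) : Option N → O → Option N → Prop
  | some s, op, some s' => ktsStep I s op s'
  | _, _, none => True
  | none, _, some _ => False

/-- `w` is an infinite path of the sink-extended KTS `K_ι`. -/
def KιPath (I : IFD N O) (w : InfPath (Option N) O) : Prop :=
  ∀ i, sinkStep I (w.state i) (w.act i) (w.state (i + 1))

/-- `K_ι ⊨_l φ`: every infinite path of `K_ι` satisfies `φ`. -/
def KιModels (I : IFD N O) (φ : LTL (SProp N) O) : Prop :=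
  ∀ w, KιPath I w → ISat (labelι I) φ w

/-- Satisfaction `K_ι ⊢ R` in the infinite-path, sink-extended semantics. -/
def KιEnt (I : IFD N O) : LReq N O → Prop
  | .ex P => ¬ KιModels I (.not (encι P))
  | .no P => KιModels I (.not (encι P))
  | .constr P P' => KιModels I (.or (.not (encι P)) (encι P'))

/-- The leading node constraint of a kind. -/
def LKind.firstNode : LKind N O → NodePat N
  | .step n _ _ => n
  | .plus n _ _ => n
  | .stepC n _ _ _ => n
  | .plusC n _ _ _ => n

/-- The leading operation set of a kind. -/
def LKind.firstOps : LKind N O → Set O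
  | .step _ o _ => o
  | .plus _ o _ => o
  | .stepC _ o _ _ => o
  | .plusC _ o _ _ => o

end IFCIL

/-! A path of the KTS of `I` satisfying `enc(P)` is the encoding of a path of `I`, obtained by
lifting each transition `(n, op, n')` to an arc `(n, o, n')` with `op ∈ o`, and the operation
chosen on each arc witnesses the nonempty intersection that `P` requires of it; conversely, a
path of kind `P` is encoded by choosing such a witness on every arc. Both directions are
inductions along the path; the `+` arrows are handled by the expansion law
`φ U ψ ≡ ψ ∨ (φ ∧ X (φ U ψ))` of the finite-path semantics. -/

section FiniteSemantics

variable {S A Pr : Type} {L : S → Set Pr}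

@[simp] theorem FinPath.drop_zero (w : FinPath S A) : w.drop 0 = w := by
  obtain ⟨s, _ | _⟩ := w <;> rfl

@[simp] theorem FinPath.drop_succ_cons (s s' : S) (a : A) (r : List (A × S)) (k : ℕ) :
    FinPath.drop ⟨s, (a, s') :: r⟩ (k + 1) = FinPath.drop ⟨s', r⟩ k := rfl

theorem FSat.and_iff {φ ψ : LTL Pr A} {w : FinPath S A} :
    FSat L (.and φ ψ) w ↔ FSat L φ w ∧ FSat L ψ w := Iff.rfl

@[simp] theorem FSat.not_acts_nil {o : Set A} {s : S} : ¬ FSat L (.acts o) ⟨s, []⟩ := by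
  simp [FSat]

@[simp] theorem FSat.acts_cons_iff {o : Set A} {s s' : S} {a : A} {r : List (A × S)} :
    FSat L (.acts o) ⟨s, (a, s') :: r⟩ ↔ a ∈ o := by
  simp [FSat]

@[simp] theorem FSat.not_next_nil {φ : LTL Pr A} {s : S} : ¬ FSat L (.next φ) ⟨s, []⟩ := by
  simp [FSat]

@[simp] theorem FSat.next_cons_iff {φ : LTL Pr A} {s s' : S} {a : A} {r : List (A × S)} :
    FSat L (.next φ) ⟨s, (a, s') :: r⟩ ↔ FSat L φ ⟨s', r⟩ := by
  simp [FSat]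

theorem FSat.not_next_tt_iff {w : FinPath S A} :
    FSat L (.not (.next .tt)) w ↔ w.rest = [] := by
  obtain ⟨s, _ | ⟨⟨a, s'⟩, r⟩⟩ := w <;> simp [FSat]

theorem FSat.rest_ne_nil_of_acts {o : Set A} {w : FinPath S A} (h : FSat L (.acts o) w) :
    w.rest ≠ [] := by
  obtain ⟨s, _ | _⟩ := w
  · exact absurd h FSat.not_acts_nil
  · exact List.cons_ne_nil _ _

theorem FSat.next_mono {φ ψ : LTL Pr A} {w : FinPath S A}
    (himp : ∀ w, FSat L φ w → FSat L ψ w) (h : FSat L (.next φ) w) : FSat L (.next ψ) w :=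
  let ⟨a, s, r, hr, hφ⟩ := h
  ⟨a, s, r, hr, himp _ hφ⟩

theorem FSat.untl_of {φ ψ : LTL Pr A} {w : FinPath S A} (h : FSat L ψ w) :
    FSat L (.untl φ ψ) w :=
  ⟨0, Nat.zero_le _, by rwa [FinPath.drop_zero], fun _ hj => absurd hj (Nat.not_lt_zero _)⟩

theorem FSat.untl_iff {φ ψ : LTL Pr A} {w : FinPath S A} :
    FSat L (.untl φ ψ) w ↔ FSat L ψ w ∨ FSat L (.and φ (.next (.untl φ ψ))) w := by
  obtain ⟨s, _ | ⟨⟨a, s'⟩, r⟩⟩ := w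
  · refine ⟨fun ⟨k, hk, hψ, _⟩ => Or.inl ?_, fun h => ?_⟩
    · obtain rfl : k = 0 := Nat.le_zero.mp hk
      simpa using hψ
    · obtain hψ | ⟨-, hnext⟩ := h
      · exact FSat.untl_of hψ
      · exact absurd hnext FSat.not_next_nil
  · rw [FSat.and_iff, FSat.next_cons_iff]
    constructor
    · rintro ⟨_ | k, hk, hψ, hφ⟩
      · exact Or.inl (by simpa using hψ)
      · exact Or.inr ⟨by simpa using hφ 0 k.succ_pos,
          k, by simpa using hk, hψ, fun j hj => hφ (j + 1) (by omega)⟩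
    · rintro (hψ | ⟨hφ, k, hk, hψ, hφ'⟩)
      · exact FSat.untl_of hψ
      · refine ⟨k + 1, by simpa using hk, hψ, fun j hj => ?_⟩
        rcases j with _ | j
        · simpa using hφ
        · exact hφ' j (by omega)

theorem FSat.rest_ne_nil_of_encK {N O : Type} {L : S → Set (NodePat N)} {P : LKind N O}
    {w : FinPath S O} (h : FSat L (encK P) w) : w.rest ≠ [] := by
  cases P <;> exact FSat.rest_ne_nil_of_acts h.2.1

end FiniteSemantics

section Encoding

variable {N O : Type} {I : IFD N O}

theorem Chained.tail {a : Arc N O} {π : List (Arc N O)} (h : Chained (a :: π)) : Chained π := by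
  obtain _ | ⟨b, π⟩ := π
  · trivial
  · exact h.2

theorem encRest_length_eq {π : List (Arc N O)} {r : List (O × N)} (h : encRest π r) :
    π.length = r.length := by
  induction π generalizing r with
  | nil => cases r <;> simp_all [encRest]
  | cons a π ih =>
    obtain ⟨n, o, n'⟩ := a
    rcases r with _ | ⟨⟨op, s⟩, r⟩
    · exact absurd h id
    · simpa using ih h.2.2

theorem encPath_cons_iff {n n' s : N} {o : Set O} {π : List (Arc N O)} {rest : List (O × N)} :
    encPath ((n, o, n') :: π) ⟨s, rest⟩ ↔
      s = n ∧ ∃ op r, rest = (op, n') :: r ∧ op ∈ o ∧ encRest π r := by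
  obtain _ | ⟨⟨op, s'⟩, r⟩ := rest
  · simp [encPath, encRest]
  · constructor
    · rintro ⟨rfl, hop, rfl, hr⟩
      exact ⟨rfl, op, r, rfl, hop, hr⟩
    · rintro ⟨rfl, _, _, h, hop, hr⟩
      obtain ⟨⟨rfl, rfl⟩, rfl⟩ := List.cons_eq_cons.mp h |>.imp_left Prod.mk.inj
      exact ⟨rfl, hop, rfl, hr⟩

theorem encPath_of_chained {a : Arc N O} {π : List (Arc N O)} {r : List (O × N)}
    (hch : Chained (a :: π)) (hπ : π ≠ []) (hr : encRest π r) :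
    encPath π ⟨a.2.2, r⟩ := by
  obtain _ | ⟨⟨n, o, n'⟩, π⟩ := π
  · exact absurd rfl hπ
  · exact ⟨hch.1, hr⟩

theorem encRest_of_encPath {π : List (Arc N O)} {s : N} {r : List (O × N)}
    (h : encPath π ⟨s, r⟩) : encRest π r := by
  obtain _ | ⟨⟨n, o, n'⟩, π⟩ := π
  · exact absurd h id
  · exact h.2

theorem encPath_first_eq {a : Arc N O} {π : List (Arc N O)} {w : FinPath N O}
    (hch : Chained (a :: π)) (hw : encPath π w) : w.first = a.2.2 := by
  obtain _ | ⟨b, π⟩ := π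
  · exact absurd hw id
  · exact hw.1.trans hch.1.symm

theorem Chained.cons_of_encPath {n n' : N} {o : Set O} {π : List (Arc N O)} {r : List (O × N)}
    (hch : Chained π) (hw : encPath π ⟨n', r⟩) : Chained ((n, o, n') :: π) := by
  obtain _ | ⟨b, π⟩ := π
  · exact absurd hw id
  · exact ⟨hw.1, hch⟩

theorem KTSPath.of_encPath {π : List (Arc N O)} {w : FinPath N O}
    (hπ : PathIn I π) (hw : encPath π w) : KTSPath I w := by
  obtain ⟨s, rest⟩ := w
  induction π generalizing s rest with
  | nil => exact absurd hw id
  | cons a π ih =>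
    obtain ⟨n, o, n'⟩ := a
    obtain ⟨rfl, op, r, rfl, hop, hr⟩ := encPath_cons_iff.mp hw
    obtain ⟨-, hch, hE⟩ := hπ
    refine ⟨⟨o, hE _ List.mem_cons_self, hop⟩, ?_⟩
    rcases eq_or_ne π [] with rfl | hne
    · obtain rfl : r = [] := List.length_eq_zero_iff.mp (encRest_length_eq hr).symm
      trivial
    · exact ih ⟨hne, hch.tail, fun b hb => hE b (List.mem_cons_of_mem _ hb)⟩ _ _
        (encPath_of_chained hch hne hr)

theorem KTSPath.exists_encPath {w : FinPath N O} (hw : KTSPath I w) (hne : w.rest ≠ []) :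
    ∃ π, PathIn I π ∧ encPath π w := by
  obtain ⟨s, rest⟩ := w
  induction rest generalizing s with
  | nil => exact absurd rfl hne
  | cons step r ih =>
    obtain ⟨op, s'⟩ := step
    obtain ⟨⟨o, hE, hop⟩, hr⟩ := hw
    rcases eq_or_ne r [] with rfl | hr_ne
    · exact ⟨[(s, o, s')], ⟨List.cons_ne_nil _ _, trivial, by simpa using hE⟩,
        encPath_cons_iff.mpr ⟨rfl, op, [], rfl, hop, trivial⟩⟩
    · obtain ⟨π, ⟨-, hch, hπE⟩, hwπ⟩ := ih s' hr hr_ne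
      exact ⟨(s, o, s') :: π,
        ⟨List.cons_ne_nil _ _, hch.cons_of_encPath hwπ,
          List.forall_mem_cons.mpr ⟨hE, hπE⟩⟩,
        encPath_cons_iff.mpr ⟨rfl, op, r, rfl, hop, encRest_of_encPath hwπ⟩⟩

end Encoding

section Correctness

variable {N O : Type} {I : IFD N O}

theorem LSat.step_iff {n n' : N} {o o' : Set O} {m m' : NodePat N} :
    LSat I [(n, o, n')] (.step m o' m') ↔
      NodePat.mat I m n ∧ NodePat.mat I m' n' ∧ (o ∩ o').Nonempty :=
  ⟨fun h => by cases h; exact ⟨‹_›, ‹_›, ‹_›⟩,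
    fun ⟨hm, hm', ho⟩ => .step hm hm' ho⟩

theorem exists_encPath_cons_fSat {n n' : N} {o o' : Set O} {m : NodePat N}
    {π : List (Arc N O)} {w : FinPath N O} {φ : LTL (NodePat N) O}
    (hstep : LSat I [(n, o, n')] (.step m o' .star)) (hch : Chained ((n, o, n') :: π))
    (hw : encPath π w) (hφ : FSat (labelOf I) φ w) :
    ∃ w', encPath ((n, o, n') :: π) w' ∧
      FSat (labelOf I) (.and (.atom m) (.and (.acts o') (.next φ))) w' := by
  obtain ⟨hm, -, op, hop, ho'⟩ := LSat.step_iff.mp hstep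
  obtain ⟨s, r⟩ := w
  obtain rfl : s = n' := encPath_first_eq hch hw
  exact ⟨⟨n, (op, s) :: r⟩,
    encPath_cons_iff.mpr ⟨rfl, op, r, rfl, hop, encRest_of_encPath hw⟩,
    hm, FSat.acts_cons_iff.mpr ho', FSat.next_cons_iff.mpr hφ⟩

theorem LSat.exists_encPath_fSat {π : List (Arc N O)} {P : LKind N O}
    (h : LSat I π P) (hch : Chained π) :
    ∃ w, encPath π w ∧ FSat (labelOf I) (encK P) w := by
  induction h with
  | @step m n m' n' o o' hm hm' ho =>
    obtain ⟨op, hop, ho'⟩ := ho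
    exact ⟨⟨n, [(op, n')]⟩, encPath_cons_iff.mpr ⟨rfl, op, [], rfl, hop, trivial⟩,
      hm, FSat.acts_cons_iff.mpr ho',
      FSat.next_cons_iff.mpr ⟨hm', FSat.not_next_tt_iff.mpr rfl⟩⟩
  | plusBase _ ih =>
    obtain ⟨w, hw, hm, ho', hnext⟩ := ih hch
    exact ⟨w, hw, hm, ho', hnext.next_mono fun _ => FSat.untl_of⟩
  | plusStep hstep _ _ ih =>
    obtain ⟨w, hw, -, hmore⟩ := ih hch.tail
    exact exists_encPath_cons_fSat hstep hch hw (FSat.untl_iff.mpr (.inr hmore))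
  | stepC hstep _ _ ih =>
    obtain ⟨w, hw, hP⟩ := ih hch.tail
    exact exists_encPath_cons_fSat hstep hch hw hP
  | plusCBase _ ih =>
    obtain ⟨w, hw, hm, ho', hnext⟩ := ih hch
    exact ⟨w, hw, hm, ho', hnext.next_mono fun _ => FSat.untl_of⟩
  | plusCStep hstep _ _ ih =>
    obtain ⟨w, hw, -, hmore⟩ := ih hch.tail
    exact exists_encPath_cons_fSat hstep hch hw (FSat.untl_iff.mpr (.inr hmore))

theorem LSat.of_encPath_fSat {π : List (Arc N O)} {P : LKind N O} {w : FinPath N O}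
    (hch : Chained π) (hw : encPath π w) (hP : FSat (labelOf I) (encK P) w) : LSat I π P := by
  induction π generalizing P w with
  | nil => exact absurd hw id
  | cons a π ih =>
    obtain ⟨n, o, n'⟩ := a
    obtain ⟨s, rest⟩ := w
    obtain ⟨rfl, op, r, rfl, hop, hr⟩ := encPath_cons_iff.mp hw
    have hπ_nil : π = [] ↔ r = [] := by
      rw [← List.length_eq_zero_iff, encRest_length_eq hr, List.length_eq_zero_iff]
    have htail {Q : LKind N O} (hQ : FSat (labelOf I) (encK Q) ⟨n', r⟩) : LSat I π Q :=
      ih hch.tail (encPath_of_chained hch (mt hπ_nil.mp (FSat.rest_ne_nil_of_encK hQ)) hr) hQ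
    have hstep {m : NodePat N} {o' : Set O} (hm : NodePat.mat I m s) (ho' : op ∈ o') :
        LSat I [(s, o, n')] (.step m o' .star) :=
      .step hm trivial ⟨op, hop, ho'⟩
    cases P <;>
      simp only [encK, FSat.and_iff, FSat.acts_cons_iff, FSat.next_cons_iff] at hP
    case step m o' m' =>
      obtain ⟨hm, ho', hm', hend⟩ := hP
      obtain rfl := hπ_nil.mpr (FSat.not_next_tt_iff.mp hend)
      exact .step hm hm' ⟨op, hop, ho'⟩
    case plus m o' m' =>
      obtain ⟨hm, ho', hU⟩ := hP
      rcases FSat.untl_iff.mp hU with ⟨hm', hend⟩ | hmore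
      · obtain rfl := hπ_nil.mpr (FSat.not_next_tt_iff.mp hend)
        exact .plusBase (.step hm hm' ⟨op, hop, ho'⟩)
      · exact .plusStep (hstep hm ho') (htail ⟨trivial, hmore⟩)
    case stepC m o' m' Q =>
      obtain ⟨hm, ho', hQ⟩ := hP
      exact .stepC (hstep hm ho') (htail hQ)
    case plusC m o' m' Q =>
      obtain ⟨hm, ho', hU⟩ := hP
      rcases FSat.untl_iff.mp hU with hQ | hmore
      · exact .plusCBase (.stepC (hstep hm ho') (htail hQ))
      · exact .plusCStep (hstep hm ho') (htail ⟨trivial, hmore⟩)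

end Correctness

/-- For any information flow diagram `I` with KTS `K` and path
existence requirement `P`: `K ⊢ P` iff `I ⊨ P`; i.e., `K` does not satisfy
`¬enc(P)` on all finite paths iff some path of `I` has kind `P`. -/
theorem correctness_existence {N O : Type} (I : IFD N O) (P : LKind N O) :
    (¬ KModels I (.not (encK P))) ↔ (∃ π, PathIn I π ∧ LSat I π P) := by
  simp only [KModels, FSat, not_forall, not_not, exists_prop]
  constructor
  · rintro ⟨w, hw, hP⟩
    obtain ⟨π, hπ, hwπ⟩ := hw.exists_encPath (FSat.rest_ne_nil_of_encK hP)
    exact ⟨π, hπ, LSat.of_encPath_fSat hπ.2.1 hwπ hP⟩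
  · rintro ⟨π, hπ, hP⟩
    obtain ⟨w, hwπ, hw⟩ := hP.exists_encPath_fSat hπ.2.1
    exact ⟨w, KTSPath.of_encPath hπ hwπ, hw⟩
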